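/- arXiv:1506.09052 — 5 statements merged into one kernel-verified Lean document; each statement's English description precedes it below -/
import Mathlib

section
/- Let γ : ℝ → ℝ² be a C³ unit-speed curve with unit normal n(s) = J(γ'(s)) where J(a,b) = (−b,a), and signed curvature κ(s) = ⟨γ''(s), n(s)⟩. If κ(s) + ⟨γ(s), n(s)⟩ = 0 for all s ∈ ℝ, then κ(s) = κ(0)·exp((‖γ(s)‖² − ‖γ(0)‖²)/2) for all s ∈ ℝ. In particular κ never changes sign: either κ(s) = 0 for all s, or κ(s) ≠ 0 for all s. -/
open Real
open scoped InnerProductSpace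

/-- Rotation by `π/2` in the Euclidean plane: `J(a, b) = (-b, a)`. -/
noncomputable def Jrot (v : EuclideanSpace ℝ (Fin 2)) : EuclideanSpace ℝ (Fin 2) :=
  WithLp.toLp 2 ![-(v 1), v 0]

/-!
Unit speed makes `γ''` orthogonal to `γ'`, so in the plane `γ'' = κ n` and hence
`n' = J γ'' = -κ γ'`. Differentiating `κ = -⟨γ, n⟩` and using `⟨γ', n⟩ = 0` gives
`κ' = κ ⟨γ, γ'⟩ = κ · (‖γ‖² / 2)'`, a linear ODE solved by the exponential formula.
-/

theorem eq_mul_exp_sub_of_hasDerivAt {f g g' : ℝ → ℝ}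
    (hf : ∀ s, HasDerivAt f (f s * g' s) s) (hg : ∀ s, HasDerivAt g (g' s) s) (a s : ℝ) :
    f s = f a * exp (g s - g a) := by
  have hconst : ∀ s, HasDerivAt (fun u => f u * exp (-g u)) 0 s := fun s =>
    ((hf s).mul (hg s).neg.exp).congr_deriv (by ring)
  have key := is_const_of_deriv_eq_zero (fun s => (hconst s).differentiableAt)
    (fun s => (hconst s).deriv) s a
  calc f s = f s * exp (-g s) * exp (g s) := by
        rw [mul_assoc, ← exp_add, neg_add_cancel, exp_zero, mul_one]
    _ = f a * exp (-g a) * exp (g s) := by rw [key]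
    _ = f a * exp (g s - g a) := by rw [mul_assoc, ← exp_add, neg_add_eq_sub]

theorem inner_eq_zero_of_hasDerivAt_of_norm_eq {E : Type*} [NormedAddCommGroup E]
    [InnerProductSpace ℝ E] {T : ℝ → E} {T' : E} {c s : ℝ} (hT : ∀ u, ‖T u‖ = c)
    (hT' : HasDerivAt T T' s) : ⟪T s, T'⟫_ℝ = 0 := by
  have h := hT'.norm_sq
  simp only [hT] at h
  simpa using h.unique (hasDerivAt_const s _)

theorem EuclideanSpace.real_inner_fin_two (v w : EuclideanSpace ℝ (Fin 2)) :
    ⟪v, w⟫_ℝ = v 0 * w 0 + v 1 * w 1 := by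
  simp [PiLp.inner_apply, Fin.sum_univ_two, mul_comm]

@[simp] theorem Jrot_apply_zero (v : EuclideanSpace ℝ (Fin 2)) : Jrot v 0 = -(v 1) := rfl

@[simp] theorem Jrot_apply_one (v : EuclideanSpace ℝ (Fin 2)) : Jrot v 1 = v 0 := rfl

noncomputable def JrotCLM : EuclideanSpace ℝ (Fin 2) →L[ℝ] EuclideanSpace ℝ (Fin 2) :=
  LinearMap.toContinuousLinearMap
    { toFun := Jrot
      map_add' := fun v w => by ext i; fin_cases i <;> simp; ring
      map_smul' := fun c v => by ext i; fin_cases i <;> simp }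

theorem Jrot_smul (c : ℝ) (v : EuclideanSpace ℝ (Fin 2)) : Jrot (c • v) = c • Jrot v :=
  JrotCLM.map_smul c v

theorem HasDerivAt.Jrot {f : ℝ → EuclideanSpace ℝ (Fin 2)} {f' : EuclideanSpace ℝ (Fin 2)}
    {s : ℝ} (hf : HasDerivAt f f' s) : HasDerivAt (fun u => Jrot (f u)) (Jrot f') s :=
  JrotCLM.hasFDerivAt.comp_hasDerivAt s hf

theorem Jrot_Jrot (v : EuclideanSpace ℝ (Fin 2)) : Jrot (Jrot v) = -v := by
  ext i; fin_cases i <;> simp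

theorem inner_Jrot_right_self (v : EuclideanSpace ℝ (Fin 2)) : ⟪v, Jrot v⟫_ℝ = 0 := by
  simp [EuclideanSpace.real_inner_fin_two]; ring

theorem eq_inner_Jrot_smul_Jrot_of_inner_eq_zero {t w : EuclideanSpace ℝ (Fin 2)}
    (ht : ‖t‖ = 1) (hw : ⟪t, w⟫_ℝ = 0) : w = ⟪w, Jrot t⟫_ℝ • Jrot t := by
  have hnorm : t 0 * t 0 + t 1 * t 1 = 1 := by
    rw [← EuclideanSpace.real_inner_fin_two, real_inner_self_eq_norm_sq, ht, one_pow]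
  rw [EuclideanSpace.real_inner_fin_two] at hw
  ext i; fin_cases i <;> simp [EuclideanSpace.real_inner_fin_two]
  · linear_combination t 0 * hw - w 0 * hnorm
  · linear_combination t 1 * hw - w 1 * hnorm

/-- For a `C³` unit-speed plane curve satisfying the contracting self-similar
equation `κ + ⟨γ, n⟩ = 0`, the curvature satisfies
`κ(s) = κ(0)·exp((‖γ(s)‖² − ‖γ(0)‖²)/2)`; in particular `κ` never changes sign. -/
theorem curvature_exponential_formula
    (γ : ℝ → EuclideanSpace ℝ (Fin 2))
    (hγ : ContDiff ℝ 3 γ)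
    (hunit : ∀ s : ℝ, ‖deriv γ s‖ = 1)
    (n : ℝ → EuclideanSpace ℝ (Fin 2))
    (hn : ∀ s : ℝ, n s = Jrot (deriv γ s))
    (κ : ℝ → ℝ)
    (hκ : ∀ s : ℝ, κ s = ⟪deriv (deriv γ) s, n s⟫_ℝ)
    (heq : ∀ s : ℝ, κ s + ⟪γ s, n s⟫_ℝ = 0) :
    (∀ s : ℝ, κ s = κ 0 * Real.exp ((‖γ s‖ ^ 2 - ‖γ 0‖ ^ 2) / 2)) ∧
      ((∀ s : ℝ, κ s = 0) ∨ (∀ s : ℝ, κ s ≠ 0)) := by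
  have hγ' : ∀ s, HasDerivAt γ (deriv γ s) s := fun s =>
    (hγ.differentiable (by norm_num) s).hasDerivAt
  have hγ'' : ∀ s, HasDerivAt (deriv γ) (deriv (deriv γ) s) s := fun s =>
    ((hγ.deriv' (n := 2)).differentiable (by norm_num) s).hasDerivAt
  have hacc : ∀ s, deriv (deriv γ) s = κ s • n s := fun s => by
    rw [hκ, hn]
    exact eq_inner_Jrot_smul_Jrot_of_inner_eq_zero (hunit s)
      (inner_eq_zero_of_hasDerivAt_of_norm_eq hunit (hγ'' s))
  have hn' : ∀ s, HasDerivAt n (-κ s • deriv γ s) s := fun s => by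
    have h := (hγ'' s).Jrot
    rwa [hacc, hn, Jrot_smul, Jrot_Jrot, smul_neg, ← neg_smul, ← funext hn] at h
  have hκ' : ∀ s, HasDerivAt κ (κ s * ⟪γ s, deriv γ s⟫_ℝ) s := fun s => by
    have h := ((hγ' s).inner ℝ (hn' s)).neg
    rw [hn s, inner_Jrot_right_self, real_inner_smul_right] at h
    exact (h.congr_deriv (by ring)).congr_of_eventuallyEq
      (.of_forall fun u => eq_neg_of_add_eq_zero_left (heq u))
  have hnormsq : ∀ s, HasDerivAt (fun u => ‖γ u‖ ^ 2 / 2) ⟪γ s, deriv γ s⟫_ℝ s := fun s =>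
    ((hγ' s).norm_sq.div_const 2).congr_deriv (by ring)
  have hformula : ∀ s, κ s = κ 0 * exp ((‖γ s‖ ^ 2 - ‖γ 0‖ ^ 2) / 2) := fun s => by
    rw [sub_div]
    exact eq_mul_exp_sub_of_hasDerivAt hκ' hnormsq 0 s
  refine ⟨hformula, ?_⟩
  by_cases h0 : κ 0 = 0
  · exact .inl fun s => by rw [hformula s, h0, zero_mul]
  · exact .inr fun s => by rw [hformula s]; exact mul_ne_zero h0 (exp_ne_zero _)
end

section
/- Let L > 0 and let γ = (x, y) : ℝ → ℝ² be a C², L-periodic, unit-speed curve with unit normal n(s) = J(γ'(s)) where J(a,b) = (−b,a), and signed curvature κ(s) = ⟨γ''(s), n(s)⟩. Assume κ(s) + ⟨γ(s), n(s)⟩ = 0 for all s, and ∫₀^L κ(s) ds = 2π. Then the enclosed (oriented) area equals π, i.e. (1/2)∫₀^L (x(s)·y'(s) − y(s)·x'(s)) ds = π. -/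
open Real
open scoped InnerProductSpace

/-! The self-similar equation says that the area form `x y' − y x' = −⟨γ, Jγ'⟩` equals the
curvature pointwise, so the area integral is half the total curvature `2π`. -/

theorem inner_Jrot (v w : EuclideanSpace ℝ (Fin 2)) :
    ⟪v, Jrot w⟫_ℝ = v 1 * w 0 - v 0 * w 1 := by
  simp only [Jrot, PiLp.inner_apply, RCLike.inner_apply, conj_trivial,
    Fin.sum_univ_two, Matrix.cons_val_zero, Matrix.cons_val_one]
  ring

theorem contracting_self_similar_area_pi_general
    (L : ℝ)
    (γ : ℝ → EuclideanSpace ℝ (Fin 2))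
    (n : ℝ → EuclideanSpace ℝ (Fin 2))
    (hn : ∀ s : ℝ, n s = Jrot (deriv γ s))
    (κ : ℝ → ℝ)
    (heq : ∀ s : ℝ, κ s + ⟪γ s, n s⟫_ℝ = 0)
    (hindex : ∫ s in (0:ℝ)..L, κ s = 2 * π) :
    (1 / 2) * ∫ s in (0:ℝ)..L, (γ s 0 * deriv γ s 1 - γ s 1 * deriv γ s 0) = π := by
  have area_form_eq_curvature : ∀ s, γ s 0 * deriv γ s 1 - γ s 1 * deriv γ s 0 = κ s := by
    intro s
    have h := heq s
    rw [hn, inner_Jrot] at h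
    linarith
  rw [intervalIntegral.integral_congr fun s _ => area_form_eq_curvature s, hindex]
  ring

/-- A closed unit-speed plane curve of rotation index `+1` satisfying the
contracting self-similar equation `κ + ⟨γ, n⟩ = 0` encloses (oriented) area `π`:
`(1/2)∫₀^L (x y' − y x') ds = π`. -/
theorem contracting_self_similar_area_pi
    (L : ℝ) (hL : 0 < L)
    (γ : ℝ → EuclideanSpace ℝ (Fin 2))
    (hγ : ContDiff ℝ 2 γ)
    (hper : ∀ s : ℝ, γ (s + L) = γ s)
    (hunit : ∀ s : ℝ, ‖deriv γ s‖ = 1)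
    (n : ℝ → EuclideanSpace ℝ (Fin 2))
    (hn : ∀ s : ℝ, n s = Jrot (deriv γ s))
    (κ : ℝ → ℝ)
    (hκ : ∀ s : ℝ, κ s = ⟪deriv (deriv γ) s, n s⟫_ℝ)
    (heq : ∀ s : ℝ, κ s + ⟪γ s, n s⟫_ℝ = 0)
    (hindex : ∫ s in (0:ℝ)..L, κ s = 2 * π) :
    (1 / 2) * ∫ s in (0:ℝ)..L, (γ s 0 * deriv γ s 1 - γ s 1 * deriv γ s 0) = π :=
  contracting_self_similar_area_pi_general L γ n hn κ heq hindex
end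

section
/- (Cauchy's formula) Let p : ℝ → ℝ be a C², 2π-periodic function, and define γ̄(θ) = (p(θ)cos θ − p'(θ)sin θ, p(θ)sin θ + p'(θ)cos θ). If p(θ) + p''(θ) > 0 for all θ, then the length of γ̄ over one period equals the integral of the support function: ∫₀^{2π} ‖γ̄'(θ)‖ dθ = ∫₀^{2π} (p(θ) + p''(θ)) dθ = ∫₀^{2π} p(θ) dθ. -/
/-!
Differentiating the support parametrization, the terms in `p'` cancel and
`γ̄' = (p + p'') • (-sin θ, cos θ)`, so `‖γ̄'‖ = |p + p''| = p + p''`. The integral of `p''` over a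
period vanishes because `p'` is again `2π`-periodic.
-/

open Real Function

section

variable {E : Type*} [NormedAddCommGroup E] [NormedSpace ℝ E]

theorem Function.Periodic.deriv {f : ℝ → E} {T : ℝ} (hf : Periodic f T) :
    Periodic (_root_.deriv f) T := fun x => by
  rw [← deriv_comp_add_const, hf.funext]

theorem Function.Periodic.intervalIntegral_deriv_eq_zero [CompleteSpace E] {f : ℝ → E} {T : ℝ}
    (hf : Periodic f T) (hf₁ : ContDiff ℝ 1 f) (a : ℝ) :
    ∫ x in a..a + T, _root_.deriv f x = 0 := by
  rw [intervalIntegral.integral_deriv_eq_sub (fun x _ => hf₁.differentiable one_ne_zero x)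
    ((hf₁.continuous_deriv le_rfl).intervalIntegrable _ _), hf a, sub_self]

end

theorem HasDerivAt.toLp_vec₂ {f g : ℝ → ℝ} {f' g' x : ℝ} (hf : HasDerivAt f f' x)
    (hg : HasDerivAt g g' x) : HasDerivAt (fun t => !₂[f t, g t]) !₂[f', g'] x := by
  have hfg : HasDerivAt (fun t => ![f t, g t]) ![f', g'] x := by
    rw [hasDerivAt_pi]
    exact Fin.forall_fin_two.mpr ⟨hf, hg⟩
  exact (PiLp.hasFDerivAt_toLp 2 _).comp_hasDerivAt x hfg

theorem EuclideanSpace.norm_neg_sin_cos (θ : ℝ) : ‖!₂[-sin θ, cos θ]‖ = 1 := by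
  simp [EuclideanSpace.norm_eq, Fin.sum_univ_two, sin_sq_add_cos_sq]

noncomputable def supportCurve (p : ℝ → ℝ) (θ : ℝ) : EuclideanSpace ℝ (Fin 2) :=
  !₂[p θ * cos θ - deriv p θ * sin θ, p θ * sin θ + deriv p θ * cos θ]

theorem hasDerivAt_supportCurve {p : ℝ → ℝ} {θ : ℝ} (hp : DifferentiableAt ℝ p θ)
    (hp' : DifferentiableAt ℝ (deriv p) θ) :
    HasDerivAt (supportCurve p) ((p θ + deriv (deriv p) θ) • !₂[-sin θ, cos θ]) θ := by
  have hx := (hp.hasDerivAt.mul (hasDerivAt_cos θ)).sub (hp'.hasDerivAt.mul (hasDerivAt_sin θ))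
  have hy := (hp.hasDerivAt.mul (hasDerivAt_sin θ)).add (hp'.hasDerivAt.mul (hasDerivAt_cos θ))
  refine (hx.toLp_vec₂ hy).congr_deriv ?_
  ext i
  fin_cases i <;>
    simp only [Fin.zero_eta, Fin.mk_one, Fin.isValue, Matrix.cons_val_zero, Matrix.cons_val_one,
      Matrix.cons_val_fin_one, PiLp.smul_apply, smul_eq_mul] <;> ring

theorem norm_deriv_supportCurve {p : ℝ → ℝ} {θ : ℝ} (hp : DifferentiableAt ℝ p θ)
    (hp' : DifferentiableAt ℝ (deriv p) θ) :
    ‖deriv (supportCurve p) θ‖ = |p θ + deriv (deriv p) θ| := by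
  rw [(hasDerivAt_supportCurve hp hp').deriv, norm_smul, EuclideanSpace.norm_neg_sin_cos,
    mul_one, norm_eq_abs]

/-- Cauchy's formula: for a strictly convex closed curve given in polar tangential
coordinates by a `C²`, `2π`-periodic support function `p` with `p + p'' > 0`, the
length over one period equals `∫₀^{2π} p`. -/
theorem cauchy_formula
    (p : ℝ → ℝ)
    (hp : ContDiff ℝ 2 p)
    (hper : ∀ θ : ℝ, p (θ + 2 * π) = p θ)
    (γ : ℝ → EuclideanSpace ℝ (Fin 2))
    (hγ : ∀ θ : ℝ, γ θ = ![p θ * Real.cos θ - deriv p θ * Real.sin θ,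
                           p θ * Real.sin θ + deriv p θ * Real.cos θ])
    (hpos : ∀ θ : ℝ, 0 < p θ + deriv (deriv p) θ) :
    (∫ θ in (0:ℝ)..(2 * π), ‖deriv γ θ‖) =
        (∫ θ in (0:ℝ)..(2 * π), (p θ + deriv (deriv p) θ)) ∧
      (∫ θ in (0:ℝ)..(2 * π), (p θ + deriv (deriv p) θ)) =
        ∫ θ in (0:ℝ)..(2 * π), p θ := by
  have hp₁ : ContDiff ℝ 1 (deriv p) := hp.deriv'
  have hγ_eq : γ = supportCurve p := funext fun θ => WithLp.ofLp_injective 2 (hγ θ)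
  constructor
  · refine intervalIntegral.integral_congr fun θ _ => ?_
    rw [hγ_eq, norm_deriv_supportCurve (hp.differentiable two_ne_zero θ)
      (hp₁.differentiable one_ne_zero θ), abs_of_pos (hpos θ)]
  · have hdd : ∫ θ in (0:ℝ)..(2 * π), deriv (deriv p) θ = 0 := by
      have hper' : Periodic p (2 * π) := hper
      simpa using hper'.deriv.intervalIntegral_deriv_eq_zero hp₁ 0
    rw [intervalIntegral.integral_add (hp.continuous.intervalIntegrable _ _)
      ((hp₁.continuous_deriv le_rfl).intervalIntegrable _ _), hdd, add_zero]
end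

section
/- Let p : ℝ → ℝ be a C^∞, 2π-periodic function with p(θ) > 0 for all θ, solving p(θ)·(p(θ) + p''(θ)) = 1 for all θ ∈ ℝ. Then p is identically equal to 1. -/
open Real Set Filter Topology

/-- If `f z = 0` and `f' < 0`, then `f < 0` just to the right and `f > 0` just to
the left of `z`. -/
lemma sturm_slope_core {f : ℝ → ℝ} {f' z : ℝ} (hf : HasDerivAt f f' z)
    (h0 : f z = 0) (hf' : f' < 0) :
    (∀ᶠ θ in 𝓝[>] z, f θ < 0) ∧ (∀ᶠ θ in 𝓝[<] z, 0 < f θ) := by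
  have hs := hasDerivAt_iff_tendsto_slope.mp hf
  have hev : ∀ᶠ θ in 𝓝[≠] z, slope f z θ < 0 := hs.eventually (eventually_lt_nhds hf')
  have hsub₁ : Set.Ioi z ⊆ {z}ᶜ := fun θ hθ => ne_of_gt hθ
  have hsub₂ : Set.Iio z ⊆ {z}ᶜ := fun θ hθ => ne_of_lt hθ
  constructor
  · filter_upwards [hev.filter_mono (nhdsWithin_mono z hsub₁), self_mem_nhdsWithin]
      with θ hslope hθ
    rw [slope_def_field, h0, sub_zero] at hslope
    have h2 := mul_neg_of_neg_of_pos hslope (sub_pos.2 (hθ : z < θ))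
    rwa [div_mul_cancel₀ _ (sub_ne_zero.2 (ne_of_gt hθ))] at h2
  · filter_upwards [hev.filter_mono (nhdsWithin_mono z hsub₂), self_mem_nhdsWithin]
      with θ hslope hθ
    rw [slope_def_field, h0, sub_zero] at hslope
    have h2 := mul_pos_of_neg_of_neg hslope (sub_neg.2 (hθ : θ < z))
    rwa [div_mul_cancel₀ _ (sub_ne_zero.2 (ne_of_lt hθ))] at h2

/-- A continuous function with no zeros on `Ioo a b` has constant sign there. -/
lemma sign_const_of_ne_zero {f : ℝ → ℝ} (hf : Continuous f) {a b : ℝ}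
    (hne : ∀ θ ∈ Set.Ioo a b, f θ ≠ 0) {x y : ℝ} (hx : x ∈ Set.Ioo a b)
    (hy : y ∈ Set.Ioo a b) (hfx : f x < 0) : f y < 0 := by
  rcases lt_trichotomy (f y) 0 with h | h | h
  · exact h
  · exact absurd h (hne y hy)
  · exfalso
    have h0 : (0:ℝ) ∈ Set.uIcc (f x) (f y) := by
      rw [Set.mem_uIcc]; left; exact ⟨hfx.le, h.le⟩
    obtain ⟨c, hc, hfc⟩ := intermediate_value_uIcc (f := f) (hf.continuousOn) h0
    have : c ∈ Set.Ioo a b := Set.ordConnected_Ioo.uIcc_subset hx hy hc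
    exact hne c this hfc

set_option maxHeartbeats 2000000 in
/-- A smooth, `2π`-periodic, positive solution of the self-similar support
function equation `p(p + p'') = 1` is identically `1`: the only closed embedded
contracting self-similar solutions of the curve shortening flow are circles. -/
theorem self_similar_support_is_one
    (p : ℝ → ℝ)
    (hp : ContDiff ℝ (⊤ : ℕ∞) p)
    (hper : ∀ θ : ℝ, p (θ + 2 * π) = p θ)
    (hpos : ∀ θ : ℝ, 0 < p θ)
    (hode : ∀ θ : ℝ, p θ * (p θ + deriv (deriv p) θ) = 1) :
    ∀ θ : ℝ, p θ = 1 := by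

  by_contra hcon
  push_neg at hcon
  obtain ⟨θ₀, hθ₀⟩ := hcon
  -- smoothness
  have hp' : ContDiff ℝ (⊤ : ℕ∞) p := hp.of_le (by simp)
  have hdp : Differentiable ℝ p := hp.differentiable (by simp)
  have hq : ContDiff ℝ (⊤ : ℕ∞) (deriv p) := (contDiff_infty_iff_deriv.mp hp').2
  have hdq : Differentiable ℝ (deriv p) := hq.differentiable (by simp)
  have hr : ContDiff ℝ (⊤ : ℕ∞) (deriv (deriv p)) := (contDiff_infty_iff_deriv.mp hq).2
  have hdr : Differentiable ℝ (deriv (deriv p)) := hr.differentiable (by simp)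
  have hcq : Continuous (deriv p) := hq.continuous
  have hcr : Continuous (deriv (deriv p)) := hr.continuous
  have hπ : (0:ℝ) < π := Real.pi_pos
  -- periodicity of derivatives
  have hper_deriv : ∀ f : ℝ → ℝ, (∀ θ : ℝ, f (θ + 2 * π) = f θ) →
      ∀ θ : ℝ, deriv f (θ + 2 * π) = deriv f θ := by
    intro f hf θ
    have h1 : (fun x => f (x + 2 * π)) = f := funext fun x => hf x
    calc deriv f (θ + 2 * π) = deriv (fun x => f (x + 2 * π)) θ :=
          (deriv_comp_add_const f (2 * π) θ).symm
      _ = deriv f θ := by rw [h1]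
  have hqper : ∀ θ : ℝ, deriv p (θ + 2 * π) = deriv p θ := hper_deriv p hper
  have hrper : ∀ θ : ℝ, deriv (deriv p) (θ + 2 * π) = deriv (deriv p) θ :=
    hper_deriv (deriv p) hqper
  -- the ODE in solved form
  have hpne : ∀ θ : ℝ, p θ ≠ 0 := fun θ => (hpos θ).ne'
  have hode' : ∀ θ : ℝ, deriv (deriv p) θ = 1 / p θ - p θ := by
    intro θ
    have h := hode θ
    field_simp [hpne θ]
    nlinarith [h]
  -- third derivative
  have hr' : ∀ θ : ℝ, deriv (deriv (deriv p)) θ =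
      -(1 + 1 / (p θ)^2) * deriv p θ := by
    intro θ
    have hF : (fun θ => p θ * (p θ + deriv (deriv p) θ)) = fun _ => (1:ℝ) :=
      funext fun θ => hode θ
    have hD : HasDerivAt (fun θ => p θ * (p θ + deriv (deriv p) θ))
        (deriv p θ * (p θ + deriv (deriv p) θ) +
          p θ * (deriv p θ + deriv (deriv (deriv p)) θ)) θ :=
      (hdp θ).hasDerivAt.mul ((hdp θ).hasDerivAt.add (hdr θ).hasDerivAt)
    have hD0 : HasDerivAt (fun θ => p θ * (p θ + deriv (deriv p) θ)) 0 θ := by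
      rw [hF]; exact hasDerivAt_const θ 1
    have heq := hD.unique hD0
    rw [hode' θ] at heq
    have hp0 := hpne θ
    field_simp at heq ⊢
    nlinarith [heq]
  -- energy is constant
  set E : ℝ → ℝ := fun θ => (deriv p θ)^2 + (p θ)^2 - 2 * Real.log (p θ) with hEdef
  have hEd : ∀ θ : ℝ, HasDerivAt E 0 θ := by
    intro θ
    have h1 : HasDerivAt (fun θ => (deriv p θ)^2)
        (2 * deriv p θ * deriv (deriv p) θ) θ := by
      have := ((hdq θ).hasDerivAt).fun_pow 2
      simpa [mul_comm, mul_assoc, mul_left_comm] using this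
    have h2 : HasDerivAt (fun θ => (p θ)^2) (2 * p θ * deriv p θ) θ := by
      have := ((hdp θ).hasDerivAt).fun_pow 2
      simpa [mul_comm, mul_assoc, mul_left_comm] using this
    have h3 : HasDerivAt (fun θ => Real.log (p θ)) (deriv p θ / p θ) θ := by
      have := (Real.hasDerivAt_log (hpne θ)).comp θ (hdp θ).hasDerivAt
      simpa [div_eq_inv_mul, Function.comp_def] using this
    have h4 : HasDerivAt E
        (2 * deriv p θ * deriv (deriv p) θ + 2 * p θ * deriv p θ
          - 2 * (deriv p θ / p θ)) θ := by
      exact (h1.add h2).sub (h3.const_mul 2)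
    have h5 : 2 * deriv p θ * deriv (deriv p) θ + 2 * p θ * deriv p θ
        - 2 * (deriv p θ / p θ) = 0 := by
      rw [hode' θ]
      field_simp
      ring
    rwa [h5] at h4
  have hEconst : ∀ θ : ℝ, E θ = E 0 :=
    fun θ => is_const_of_deriv_eq_zero (fun x => (hEd x).differentiableAt)
      (fun x => (hEd x).deriv) θ 0
  -- the energy level is > 1
  have hglem : ∀ x : ℝ, 0 < x → x ≠ 1 → 1 < x^2 - 2 * Real.log x := by
    intro x hx hne
    have h1 : Real.log x < x - 1 := Real.log_lt_sub_one_of_pos hx hne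
    nlinarith [sq_nonneg (x - 1)]
  have hC1 : 1 < E 0 := by
    rw [← hEconst θ₀]
    have := hglem (p θ₀) (hpos θ₀) hθ₀
    have h2 : 0 ≤ (deriv p θ₀)^2 := sq_nonneg _
    simp only [hEdef]
    linarith
  -- zeros of p' are simple
  have hsimple : ∀ z : ℝ, deriv p z = 0 → deriv (deriv p) z ≠ 0 := by
    intro z hz hr0
    have h1 : p z = 1 := by
      have h := hode z
      rw [hr0] at h
      nlinarith [hpos z]
    have h2 : E z = 1 := by
      simp only [hEdef, hz, h1, Real.log_one]; ring
    rw [hEconst z] at h2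
    linarith
  -- next zero to the right
  have hnext : ∀ (ε z : ℝ), ε ≠ 0 → deriv p z = 0 → ε * deriv (deriv p) z < 0 →
      ∃ z', z < z' ∧ z' ≤ z + 2 * π ∧ deriv p z' = 0 ∧
        ∀ θ ∈ Set.Ioo z z', ε * deriv p θ < 0 := by
    intro ε z hε hz hrz
    have hf : HasDerivAt (fun θ => ε * deriv p θ) (ε * deriv (deriv p) z) z :=
      ((hdq z).hasDerivAt).const_mul ε
    have hev := (sturm_slope_core hf (by simp [hz]) hrz).1
    obtain ⟨u, hu, hsubu⟩ := mem_nhdsGT_iff_exists_Ioc_subset.mp hev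
    set c := min u (z + π) with hcdef
    have hzc : z < c := lt_min hu (by linarith)
    have hcle : c ≤ z + π := min_le_right _ _
    have hTcomp : IsCompact (Set.Icc c (z + 2*π) ∩ {θ | deriv p θ = 0}) :=
      isCompact_Icc.inter_right (isClosed_singleton.preimage hcq)
    have hTne : (Set.Icc c (z + 2*π) ∩ {θ | deriv p θ = 0}).Nonempty :=
      ⟨z + 2*π, ⟨⟨by linarith, le_refl _⟩, by simp [hqper z, hz]⟩⟩
    obtain ⟨z', ⟨⟨⟨hcz', hz'le⟩, hqz'⟩, hleast⟩⟩ := hTcomp.exists_isLeast hTne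
    refine ⟨z', lt_of_lt_of_le hzc hcz', hz'le, hqz', ?_⟩
    have hne : ∀ θ ∈ Set.Ioo z z', ε * deriv p θ ≠ 0 := by
      intro θ hθ
      rcases le_or_gt θ c with hle | hgt
      · exact (hsubu ⟨hθ.1, le_trans hle (min_le_left _ _)⟩).ne
      · intro h0
        have hq0 : deriv p θ = 0 := by
          rcases mul_eq_zero.mp h0 with h | h
          · exact absurd h hε
          · exact h
        have : z' ≤ θ := hleast ⟨⟨hgt.le, le_trans hθ.2.le hz'le⟩, hq0⟩
        exact absurd hθ.2 (not_lt.mpr this)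
    have hmz : z < min c z' := lt_min hzc (lt_of_lt_of_le hzc hcz')
    set x₀ := (z + min c z') / 2 with hx₀def
    have hx₀z : z < x₀ := by rw [hx₀def]; linarith
    have hx₀c : x₀ ≤ c := by
      have := min_le_left c z'; rw [hx₀def]; linarith
    have hx₀z' : x₀ < z' := by
      have := min_le_right c z'; rw [hx₀def]; linarith
    have hfx₀ : ε * deriv p x₀ < 0 := hsubu ⟨hx₀z, le_trans hx₀c (min_le_left _ _)⟩
    intro θ hθ
    exact sign_const_of_ne_zero (continuous_const.mul hcq) hne ⟨hx₀z, hx₀z'⟩ hθ hfx₀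
  -- no sign flip backwards at a right endpoint
  have hend : ∀ (ε z b : ℝ), z < b → deriv p b = 0 →
      (∀ θ ∈ Set.Ioo z b, ε * deriv p θ < 0) → ε * deriv (deriv p) b < 0 → False := by
    intro ε z b hzb hqb hsgn hrb
    have hf : HasDerivAt (fun θ => ε * deriv p θ) (ε * deriv (deriv p) b) b :=
      ((hdq b).hasDerivAt).const_mul ε
    have hev := (sturm_slope_core hf (by simp [hqb]) hrb).2
    have hmem : Set.Ioo z b ∈ 𝓝[<] b := Ioo_mem_nhdsLT hzb
    obtain ⟨θ, hθ1, hθ2⟩ := Filter.nonempty_of_mem (inter_mem hev hmem)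
    exact absurd (hsgn θ hθ2) (not_lt.mpr hθ1.le)
  -- Sturm upper bound: a gap of constant sign is shorter than π
  have hsturm_up : ∀ (ε a b : ℝ), a < b → deriv p a = 0 → deriv p b = 0 →
      (∀ θ ∈ Set.Ioo a b, 0 < ε * deriv p θ) → b - a < π := by
    intro ε a b hab hqa hqb hsgn
    by_contra hge
    push_neg at hge
    have hπb : a + π ≤ b := by linarith
    set W : ℝ → ℝ := fun θ => (ε * deriv (deriv p) θ) * Real.sin (θ - a)
        - (ε * deriv p θ) * Real.cos (θ - a) with hWdef
    have hWd : ∀ θ : ℝ, HasDerivAt W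
        (-(ε * deriv p θ * Real.sin (θ - a)) / (p θ)^2) θ := by
      intro θ
      have h1 : HasDerivAt (fun θ => ε * deriv (deriv p) θ)
          (ε * deriv (deriv (deriv p)) θ) θ := ((hdr θ).hasDerivAt).const_mul ε
      have h2 : HasDerivAt (fun θ => Real.sin (θ - a)) (Real.cos (θ - a)) θ := by
        simpa using (((hasDerivAt_id θ).sub_const a).sin)
      have h3 : HasDerivAt (fun θ => Real.cos (θ - a)) (-Real.sin (θ - a)) θ := by
        simpa using (((hasDerivAt_id θ).sub_const a).cos)
      have h4 : HasDerivAt (fun θ => ε * deriv p θ) (ε * deriv (deriv p) θ) θ :=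
        ((hdq θ).hasDerivAt).const_mul ε
      have h5 := (h1.fun_mul h2).fun_sub (h4.fun_mul h3)
      refine h5.congr_deriv ?_
      rw [hr' θ]
      field_simp [hpne θ]
      ring
    have hWanti : StrictAntiOn W (Set.Icc a (a + π)) := by
      apply strictAntiOn_of_deriv_neg (convex_Icc _ _)
      · exact Continuous.continuousOn (by fun_prop)
      · intro θ hθ
        rw [interior_Icc] at hθ
        rw [(hWd θ).deriv]
        have hθab : θ ∈ Set.Ioo a b := ⟨hθ.1, lt_of_lt_of_le hθ.2 hπb⟩
        have hsin : 0 < Real.sin (θ - a) :=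
          Real.sin_pos_of_pos_of_lt_pi (by linarith [hθ.1]) (by linarith [hθ.2])
        have hnum : 0 < ε * deriv p θ * Real.sin (θ - a) := mul_pos (hsgn θ hθab) hsin
        have hden := pow_pos (hpos θ) 2
        have := div_pos hnum hden
        rw [neg_div]
        linarith
    have hWa : W a = 0 := by simp [hWdef, hqa]
    have hWπ : W (a + π) = ε * deriv p (a + π) := by
      simp [hWdef, add_sub_cancel_left, Real.sin_pi, Real.cos_pi]
    have hWneg : W (a + π) < 0 := by
      have := hWanti (Set.left_mem_Icc.mpr (by linarith))
        (Set.right_mem_Icc.mpr (by linarith)) (by linarith)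
      rwa [hWa] at this
    have hfin : 0 ≤ ε * deriv p (a + π) := by
      rcases eq_or_lt_of_le hπb with heq | hlt
      · rw [← heq] at hqb
        simp [hqb]
      · exact (hsgn (a+π) ⟨by linarith, hlt⟩).le
    rw [hWπ] at hWneg; linarith
  -- Sturm lower bound: a gap of constant sign is longer than π/2
  have hsturm_low : ∀ (ε a b : ℝ), a < b → deriv p a = 0 → deriv p b = 0 →
      (∀ θ ∈ Set.Ioo a b, 0 < ε * deriv p θ) → ε * (1 - (p b)^2) < 0 →
      π/2 < b - a := by
    intro ε a b hab hqa hqb hsgn hpb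
    by_contra hge
    push_neg at hge
    set g : ℝ → ℝ := fun θ => ε * ((deriv p θ)^2 + 1 - (p θ)^2) with hgdef
    set w : ℝ → ℝ := fun θ => ε * (p θ * deriv p θ) with hwdef
    have hwd : ∀ θ : ℝ, HasDerivAt w (g θ) θ := by
      intro θ
      have h1 : HasDerivAt (fun θ => p θ * deriv p θ)
          (deriv p θ * deriv p θ + p θ * deriv (deriv p) θ) θ :=
        (hdp θ).hasDerivAt.mul (hdq θ).hasDerivAt
      have h2 := h1.const_mul ε
      refine h2.congr_deriv (Eq.symm ?_)
      have h := hode θ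
      simp only [hgdef]
      linear_combination (-ε) * h
    have hWd : ∀ θ : ℝ, HasDerivAt
        (fun θ => g θ * Real.sin (2*(θ - a)) - w θ * (2 * Real.cos (2*(θ - a))))
        (2 * (ε * deriv p θ) * Real.sin (2*(θ - a)) / p θ) θ := by
      intro θ
      have hg' : HasDerivAt g
          (ε * (2 * deriv p θ * deriv (deriv p) θ - 2 * p θ * deriv p θ)) θ := by
        have ha1 := (((hdq θ).hasDerivAt).fun_pow 2).add_const (1:ℝ)
        have ha2 := ha1.fun_sub (((hdp θ).hasDerivAt).fun_pow 2)
        have ha3 := ha2.const_mul ε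
        refine ha3.congr_deriv ?_
        ring
      have hlin : HasDerivAt (fun θ => 2*(θ - a)) 2 θ := by
        simpa using ((hasDerivAt_id θ).sub_const a).const_mul (2:ℝ)
      have hs2 : HasDerivAt (fun θ => Real.sin (2*(θ - a))) (2 * Real.cos (2*(θ - a))) θ := by
        simpa [mul_comm] using hlin.sin
      have hc2 : HasDerivAt (fun θ => 2 * Real.cos (2*(θ - a)))
          (-(4 * Real.sin (2*(θ - a)))) θ := by
        have := (hlin.cos).const_mul (2:ℝ)
        refine this.congr_deriv ?_
        ring
      have h5 := (hg'.fun_mul hs2).fun_sub ((hwd θ).fun_mul hc2)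
      refine h5.congr_deriv ?_
      rw [hgdef, hwdef, hode' θ]
      field_simp [hpne θ]
      ring
    have hWmono : StrictMonoOn
        (fun θ => g θ * Real.sin (2*(θ - a)) - w θ * (2 * Real.cos (2*(θ - a))))
        (Set.Icc a b) := by
      apply strictMonoOn_of_deriv_pos (convex_Icc _ _)
      · exact Continuous.continuousOn (by fun_prop)
      · intro θ hθ
        rw [interior_Icc] at hθ
        rw [(hWd θ).deriv]
        have hsin : 0 < Real.sin (2*(θ - a)) := by
          apply Real.sin_pos_of_pos_of_lt_pi
          · linarith [hθ.1]
          · linarith [hθ.2]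
        have hnum : 0 < 2 * (ε * deriv p θ) * Real.sin (2*(θ - a)) := by
          have := hsgn θ hθ
          positivity
        exact div_pos hnum (hpos θ)
    have hWa : g a * Real.sin (2*(a - a)) - w a * (2 * Real.cos (2*(a - a))) = 0 := by
      simp [hwdef, hqa]
    have hWb_pos : 0 < g b * Real.sin (2*(b - a)) - w b * (2 * Real.cos (2*(b - a))) := by
      have := hWmono (Set.left_mem_Icc.mpr hab.le) (Set.right_mem_Icc.mpr hab.le) hab
      simp only at this
      rw [hWa] at this
      exact this
    have hwb : w b = 0 := by simp [hwdef, hqb]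
    have hgb : g b = ε * (1 - (p b)^2) := by simp [hgdef, hqb]
    have hsinb : 0 ≤ Real.sin (2*(b - a)) := by
      apply Real.sin_nonneg_of_nonneg_of_le_pi
      · linarith
      · linarith
    have : g b * Real.sin (2*(b - a)) ≤ 0 :=
      mul_nonpos_of_nonpos_of_nonneg (by rw [hgb]; linarith) hsinb
    rw [hwb] at hWb_pos
    simp at hWb_pos
    linarith

  -- facts relating the sign of p'' and the size of p
  have hp_rneg : ∀ θ : ℝ, deriv (deriv p) θ < 0 → 1 < p θ := by
    intro θ h
    rw [hode' θ] at h
    by_contra hle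
    push_neg at hle
    have h1 : 1 ≤ 1 / p θ := by
      rw [le_div_iff₀ (hpos θ)]; nlinarith [hpos θ]
    linarith
  have hp_rpos : ∀ θ : ℝ, 0 < deriv (deriv p) θ → p θ < 1 := by
    intro θ h
    rw [hode' θ] at h
    by_contra hle
    push_neg at hle
    have h1 : 1 / p θ ≤ 1 := by
      rw [div_le_iff₀ (hpos θ)]; nlinarith
    linarith
  -- global maximum of p
  obtain ⟨a, hamem, hamax⟩ := isCompact_Icc.exists_isMaxOn
    (Set.nonempty_Icc.mpr (by linarith) : (Set.Icc (0:ℝ) (2*π)).Nonempty)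
    (hp.continuous.continuousOn)
  have hmax : ∀ θ : ℝ, p θ ≤ p a := by
    intro θ
    have h2π : (0:ℝ) < 2*π := by linarith
    set k := ⌊θ / (2 * π)⌋ with hk
    have h1 : (k:ℝ) ≤ θ / (2*π) := Int.floor_le _
    have h2 : θ / (2*π) < (k:ℝ) + 1 := Int.lt_floor_add_one _
    have h3 : (k:ℝ) * (2*π) ≤ θ := (le_div_iff₀ h2π).mp h1
    have h4 : θ < ((k:ℝ)+1) * (2*π) := (div_lt_iff₀ h2π).mp h2
    have hper2 : Function.Periodic p (2*π) := hper
    have h5 : p (θ - (k:ℝ) * (2*π)) = p θ := hper2.sub_int_mul_eq k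
    have h6 : θ - (k:ℝ)*(2*π) ∈ Set.Icc 0 (2*π) := ⟨by linarith, by nlinarith⟩
    calc p θ = p (θ - (k:ℝ)*(2*π)) := h5.symm
      _ ≤ p a := hamax h6
  have hqa : deriv p a = 0 := by
    have h : IsLocalMax p a := Filter.Eventually.of_forall fun x => hmax x
    exact h.deriv_eq_zero
  have hra : deriv (deriv p) a < 0 := by
    rcases (hsimple a hqa).lt_or_gt with h | h
    · exact h
    · exfalso
      have hpa : p a < 1 := hp_rpos a h
      have hrpos : ∀ θ : ℝ, 0 < deriv (deriv p) θ := by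
        intro θ
        have h1 : p θ < 1 := lt_of_le_of_lt (hmax θ) hpa
        rw [hode' θ]
        have h2 : 1 < 1 / p θ := by
          rw [lt_div_iff₀ (hpos θ)]; nlinarith [hpos θ]
        linarith
      have hmono : StrictMono (deriv p) := strictMono_of_deriv_pos hrpos
      have h3 := hmono (show (0:ℝ) < 0 + 2*π by linarith)
      rw [hqper 0] at h3
      exact lt_irrefl _ h3
  -- first gap
  obtain ⟨z₁, haz₁, hz₁le, hqz₁, hsgn₁⟩ :=
    hnext 1 a one_ne_zero hqa (by rw [one_mul]; exact hra)
  have hrz₁ : 0 < deriv (deriv p) z₁ := by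
    rcases (hsimple z₁ hqz₁).lt_or_gt with h | h
    · exact absurd (hend 1 a z₁ haz₁ hqz₁ hsgn₁ (by rw [one_mul]; exact h)) (not_false)
    · exact h
  have hpz₁ : p z₁ < 1 := hp_rpos z₁ hrz₁
  have hup0 : z₁ - a < π :=
    hsturm_up (-1) a z₁ haz₁ hqa hqz₁ (fun θ hθ => by have := hsgn₁ θ hθ; linarith)
  have hlow0 : π/2 < z₁ - a :=
    hsturm_low (-1) a z₁ haz₁ hqa hqz₁ (fun θ hθ => by have := hsgn₁ θ hθ; linarith)
      (by nlinarith [hpos z₁])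
  -- second gap
  obtain ⟨z₂, hz₁z₂, hz₂le, hqz₂, hsgn₂⟩ :=
    hnext (-1) z₁ (by norm_num) hqz₁ (by linarith)
  have hrz₂ : deriv (deriv p) z₂ < 0 := by
    rcases (hsimple z₂ hqz₂).lt_or_gt with h | h
    · exact h
    · exact absurd (hend (-1) z₁ z₂ hz₁z₂ hqz₂ hsgn₂ (by linarith)) (not_false)
  have hpz₂ : 1 < p z₂ := hp_rneg z₂ hrz₂
  have hup1 : z₂ - z₁ < π :=
    hsturm_up 1 z₁ z₂ hz₁z₂ hqz₁ hqz₂ (fun θ hθ => by have := hsgn₂ θ hθ; linarith)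
  have hlow1 : π/2 < z₂ - z₁ :=
    hsturm_low 1 z₁ z₂ hz₁z₂ hqz₁ hqz₂ (fun θ hθ => by have := hsgn₂ θ hθ; linarith)
      (by nlinarith)
  -- third gap
  obtain ⟨z₃, hz₂z₃, hz₃le, hqz₃, hsgn₃⟩ :=
    hnext 1 z₂ one_ne_zero hqz₂ (by rw [one_mul]; exact hrz₂)
  have hrz₃ : 0 < deriv (deriv p) z₃ := by
    rcases (hsimple z₃ hqz₃).lt_or_gt with h | h
    · exact absurd (hend 1 z₂ z₃ hz₂z₃ hqz₃ hsgn₃ (by rw [one_mul]; exact h)) (not_false)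
    · exact h
  have hpz₃ : p z₃ < 1 := hp_rpos z₃ hrz₃
  have hlow2 : π/2 < z₃ - z₂ :=
    hsturm_low (-1) z₂ z₃ hz₂z₃ hqz₂ hqz₃ (fun θ hθ => by have := hsgn₃ θ hθ; linarith)
      (by nlinarith [hpos z₃])
  -- where is a + 2π ?
  have hq2π : deriv p (a + 2*π) = 0 := by rw [hqper a]; exact hqa
  rcases lt_trichotomy z₃ (a + 2*π) with hlt | heq | hgt
  · -- fourth gap
    obtain ⟨z₄, hz₃z₄, hz₄le, hqz₄, hsgn₄⟩ :=
      hnext (-1) z₃ (by norm_num) hqz₃ (by linarith)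
    have hrz₄ : deriv (deriv p) z₄ < 0 := by
      rcases (hsimple z₄ hqz₄).lt_or_gt with h | h
      · exact h
      · exact absurd (hend (-1) z₃ z₄ hz₃z₄ hqz₄ hsgn₄ (by linarith)) (not_false)
    have hpz₄ : 1 < p z₄ := hp_rneg z₄ hrz₄
    have hlow3 : π/2 < z₄ - z₃ :=
      hsturm_low 1 z₃ z₄ hz₃z₄ hqz₃ hqz₄ (fun θ hθ => by have := hsgn₄ θ hθ; linarith)
        (by nlinarith)
    have hmem : a + 2*π ∈ Set.Ioo z₃ z₄ := ⟨hlt, by linarith⟩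
    have := hsgn₄ (a + 2*π) hmem
    rw [hq2π] at this
    linarith
  · have h1 := hrper a
    rw [← heq] at h1
    linarith [h1 ▸ hrz₃]
  · have hmem : a + 2*π ∈ Set.Ioo z₂ z₃ := ⟨by linarith, hgt⟩
    have := hsgn₃ (a + 2*π) hmem
    rw [hq2π] at this
    linarith
end

section
/- Let p : ℝ → ℝ be a C², 2π-periodic function with p(θ) > 0 for all θ, satisfying p(θ)·(p(θ) + p''(θ)) = 1 for all θ, and set L = ∫₀^{2π} p(θ) dθ. Then it is NOT the case that π·p(θ)² − L·p(θ) + π < 0 for all θ ∈ [0, 2π]; that is, there exists θ₀ ∈ [0, 2π] with π·p(θ₀)² − L·p(θ₀) + π ≥ 0. -/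
open Real

/-- For a `C²`, `2π`-periodic, positive solution `p` of `p(p + p'') = 1`, with
`L = ∫₀^{2π} p`, the quadratic `π t² − L t + π` cannot be negative at `p(θ)` for
every `θ ∈ [0, 2π]`: there is a `θ₀ ∈ [0, 2π]` with `π p(θ₀)² − L p(θ₀) + π ≥ 0`. -/
theorem bonnesen_quadratic_not_everywhere_negative
    (p : ℝ → ℝ)
    (hp : ContDiff ℝ 2 p)
    (hper : ∀ θ : ℝ, p (θ + 2 * π) = p θ)
    (hpos : ∀ θ : ℝ, 0 < p θ)
    (hode : ∀ θ : ℝ, p θ * (p θ + deriv (deriv p) θ) = 1)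
    (L : ℝ)
    (hL : L = ∫ θ in (0:ℝ)..(2 * π), p θ) :
    ∃ θ₀ ∈ Set.Icc (0:ℝ) (2 * π), 0 ≤ π * p θ₀ ^ 2 - L * p θ₀ + π := by
  by_contra h
  push_neg at h
  have two_pi_pos : (0:ℝ) < 2 * π := by positivity
  have hp2 : ContDiff ℝ ((1:ℕ∞) + 1) p := by
    exact_mod_cast hp
  have hd1 : Differentiable ℝ p := (contDiff_succ_iff_deriv.mp hp2).1
  have hcd1 : ContDiff ℝ (1 : ℕ∞) (deriv p) := (contDiff_succ_iff_deriv.mp hp2).2.2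
  have hd2 : Differentiable ℝ (deriv p) := hcd1.differentiable (by norm_num)
  have hc2 : Continuous (deriv (deriv p)) :=
    (contDiff_succ_iff_deriv.mp (by exact_mod_cast hcd1 : ContDiff ℝ ((0:ℕ∞) + 1) (deriv p))).2.2.continuous
  -- periodicity of deriv p
  have hperp : Function.Periodic p (2 * π) := hper
  have hperd : Function.Periodic (deriv p) (2 * π) := by
    intro x
    have e : (fun y => p (y + 2 * π)) = p := funext hper
    calc deriv p (x + 2 * π) = deriv (fun y => p (y + 2 * π)) x := by
          rw [deriv_comp_add_const]
      _ = deriv p x := by rw [e]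
  -- the function to integrate
  set g : ℝ → ℝ := fun θ => L - 2 * π * p θ - π * deriv (deriv p) θ with hg
  have hgc : Continuous g :=
    (continuous_const.sub (continuous_const.mul hp.continuous)).sub
      (continuous_const.mul hc2)
  have hgpos : ∀ θ ∈ Set.Ioo (0:ℝ) (2 * π), 0 < g θ := by
    intro θ hθ
    have h1 := h θ ⟨le_of_lt hθ.1, le_of_lt hθ.2⟩
    have h2 := hode θ
    have h3 := hpos θ
    simp only [hg]
    nlinarith [mul_pos h3 h3, pi_pos]
  have hintg : IntervalIntegrable g MeasureTheory.volume 0 (2 * π) :=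
    hgc.intervalIntegrable _ _
  have hposint : 0 < ∫ θ in (0:ℝ)..(2 * π), g θ :=
    intervalIntegral.intervalIntegral_pos_of_pos_on hintg hgpos two_pi_pos
  have hintp : IntervalIntegrable p MeasureTheory.volume 0 (2 * π) :=
    hp.continuous.intervalIntegrable _ _
  have hintq : IntervalIntegrable (deriv (deriv p)) MeasureTheory.volume 0 (2 * π) :=
    hc2.intervalIntegrable _ _
  have hq0 : (∫ θ in (0:ℝ)..(2 * π), deriv (deriv p) θ) = 0 := by
    rw [intervalIntegral.integral_deriv_eq_sub (fun x _ => hd2 x) hintq]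
    have := hperd 0
    simp only [zero_add] at this
    rw [this]
    ring
  have hzero : (∫ θ in (0:ℝ)..(2 * π), g θ) = 0 := by
    have e1 : (∫ θ in (0:ℝ)..(2 * π), g θ)
        = (∫ θ in (0:ℝ)..(2 * π), (L - 2 * π * p θ)) -
          (∫ θ in (0:ℝ)..(2 * π), π * deriv (deriv p) θ) := by
      rw [← intervalIntegral.integral_sub]
      · exact ((intervalIntegrable_const).sub (hintp.const_mul _))
      · exact hintq.const_mul _
    rw [e1, intervalIntegral.integral_sub intervalIntegrable_const (hintp.const_mul _),
      intervalIntegral.integral_const_mul, intervalIntegral.integral_const_mul,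
      intervalIntegral.integral_const, hq0, ← hL, smul_eq_mul]
    ring
  rw [hzero] at hposint
  exact lt_irrefl 0 hposint
end
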